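/- arXiv:2306.07827 — 7 statements merged into one kernel-verified Lean document; each statement's English description precedes it below -/
import Mathlib

section
/- Let S be a finite set of positive reals with block decomposition S = B₁ ∪ ... ∪ B_k (where B₁ = {a ∈ S : a ≤ 2·min S} and recursively B_{i+1} = {a ∈ S \ (B₁∪...∪B_i) : a ≤ 2·min(S \ (B₁∪...∪B_i))}), and suppose S is simple, i.e., for all i < j, 2·max B_i < min B_j. Let (U, d) be a metric space with all nonzero distances in S. Then the relation x ∼ y defined by x = y or d(x,y) ∈ B₁ is an equivalence relation on U. -/
/-- The specResidual set after removing the first `i` blocks. -/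
noncomputable def specResidual (S : Finset ℝ) (B : ℕ → Finset ℝ) (i : ℕ) : Finset ℝ :=
  S \ (Finset.range i).biUnion B

/-- `B` is the block decomposition of `S` into `k` blocks:
`B (i)` consists of the elements of the specResidual set that are at most twice its minimum,
and the blocks cover `S`. -/
def IsBlockDecomp (S : Finset ℝ) (B : ℕ → Finset ℝ) (k : ℕ) : Prop :=
  (∀ i, B i = (specResidual S B i).filter
      (fun a => a ≤ 2 * sInf (↑(specResidual S B i) : Set ℝ))) ∧
  S = (Finset.range k).biUnion B

/-- `S` (with blocks `B 0, ..., B (k-1)`) is simple: any two distinct blocks are independent. -/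
def IsSimple (B : ℕ → Finset ℝ) (k : ℕ) : Prop :=
  ∀ i j, i < j → j < k → (B i).Nonempty → (B j).Nonempty →
    2 * sSup (↑(B i) : Set ℝ) < sInf (↑(B j) : Set ℝ)

/-- If `S` is a simple finite metric spectra with block decomposition `B 0, ..., B (k-1)`
and `(U, d)` is a metric space all of whose nonzero distances lie in `S`, then
`x ∼ y ↔ x = y ∨ d(x,y) ∈ B 0` is an equivalence relation on `U`. -/
theorem stmt0 {U : Type*} [MetricSpace U] (S : Finset ℝ) (hSpos : ∀ a ∈ S, 0 < a)
    (B : ℕ → Finset ℝ) (k : ℕ) (hB : IsBlockDecomp S B k) (hsimple : IsSimple B k)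
    (hdist : ∀ x y : U, x ≠ y → dist x y ∈ S) :
    Equivalence (fun x y : U => x = y ∨ dist x y ∈ B 0) := by
  obtain ⟨hBdef, hcover⟩ := hB
  refine ⟨fun x => Or.inl rfl, ?_, ?_⟩
  · rintro x y (rfl | h)
    · exact Or.inl rfl
    · exact Or.inr (by rwa [dist_comm])
  · rintro x y z (rfl | hxy) (rfl | hyz)
    · exact Or.inl rfl
    · exact Or.inr hyz
    · exact Or.inr hxy
    · by_cases hxz : x = z
      · exact Or.inl hxz
      refine Or.inr ?_
      -- membership of dist x z in some block
      have hmem : dist x z ∈ S := hdist x z hxz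
      rw [hcover, Finset.mem_biUnion] at hmem
      obtain ⟨j, hjk, hj⟩ := hmem
      rw [Finset.mem_range] at hjk
      rcases Nat.eq_zero_or_pos j with rfl | hj0
      · exact hj
      exfalso
      have hB0ne : (B 0).Nonempty := ⟨_, hxy⟩
      have hBjne : (B j).Nonempty := ⟨_, hj⟩
      have hsim := hsimple 0 j hj0 hjk hB0ne hBjne
      have h1 : dist x y ≤ sSup (↑(B 0) : Set ℝ) :=
        le_csSup (B 0).bddAbove hxy
      have h2 : dist y z ≤ sSup (↑(B 0) : Set ℝ) :=
        le_csSup (B 0).bddAbove hyz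
      have h3 : sInf (↑(B j) : Set ℝ) ≤ dist x z :=
        csInf_le (B j).bddBelow hj
      have htri := dist_triangle x y z
      linarith
end

section
/- Let K be an infinite relational structure and let A₁,...,A_d be finite substructures. For every subcopy K' ∈ Binom(K,K) (image of an embedding of K into itself) and every ≃-equivalence class P of d-tuples of copies (x₁,...,x_d) ∈ ∏ Binom(K,A_i), the class P meets ∏ Binom(K',A_i); i.e., ≃-classes are persistent. -/
open FirstOrder FirstOrder.Language

/-- `s` is a copy of `A` in `K`: the image of an embedding of `A` into `K`. -/
def IsCopy (L : Language) (A K : Type*) [L.Structure A] [L.Structure K] (s : Set K) : Prop :=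
  ∃ f : A ↪[L] K, Set.range f = s

/-- `e` is a partial isomorphism of `K` with domain `s` and range `t`. -/
def IsPartialIso (L : Language) {K : Type*} [L.Structure K] (s t : Set K) (e : s ≃ t) : Prop :=
  ∀ (n : ℕ) (R : L.Relations n) (v : Fin n → s),
    Structure.RelMap R (fun i => ((v i : K))) ↔ Structure.RelMap R (fun i => ((e (v i) : K)))

/-- Two `d`-tuples of copies are equivalent when some partial isomorphism of `K` maps the
trace (union) of the first onto the trace of the second, carrying each `x i` onto `y i`. -/
def TupEquiv (L : Language) {K : Type*} [L.Structure K] {d : ℕ} (x y : Fin d → Set K) : Prop :=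
  ∃ e : ((⋃ i, x i : Set K)) ≃ ((⋃ i, y i : Set K)),
    IsPartialIso L _ _ e ∧
    ∀ i, (fun a : ((⋃ i, x i : Set K)) => (e a : K)) '' {a | (a : K) ∈ x i} = y i

/-- Persistence of `≃`-classes: for every subcopy `K'` of `K` and every tuple
`x` of copies of `A 0, ..., A (d-1)` in `K`, there is an equivalent tuple `y` all of
whose components lie inside `K'`. -/
theorem stmt8 {L : Language} {K : Type*} [L.Structure K] [Infinite K]
    {d : ℕ} (A : Fin d → Type*) [∀ i, L.Structure (A i)] [∀ i, Finite (A i)]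
    (x : Fin d → Set K) (hx : ∀ i, IsCopy L (A i) K (x i))
    (K' : Set K) (hK' : IsCopy L K K K') :
    ∃ y : Fin d → Set K, (∀ i, IsCopy L (A i) K (y i) ∧ y i ⊆ K') ∧ TupEquiv L x y := by
  obtain ⟨f, hf⟩ := hK'
  refine ⟨fun i => f '' x i, fun i => ⟨?_, ?_⟩, ?_⟩
  · obtain ⟨g, hg⟩ := hx i
    refine ⟨f.comp g, ?_⟩
    ext b
    simp only [Set.mem_range, Embedding.comp_apply, ← hg, Set.mem_image]
    constructor
    · rintro ⟨a, rfl⟩; exact ⟨g a, ⟨a, rfl⟩, rfl⟩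
    · rintro ⟨_, ⟨a, rfl⟩, rfl⟩; exact ⟨a, rfl⟩
  · rw [← hf]
    exact Set.image_subset_range _ _
  · have hU : (⋃ i, f '' x i) = f '' ⋃ i, x i := (Set.image_iUnion).symm
    refine ⟨(Equiv.Set.image f (⋃ i, x i) f.injective).trans (Equiv.setCongr hU.symm), ?_, ?_⟩
    · intro n R v
      have : ∀ a : (⋃ i, x i : Set K),
          (((Equiv.Set.image f (⋃ i, x i) f.injective).trans (Equiv.setCongr hU.symm)) a : K)
            = f a := fun a => rfl
      simp only [this]
      exact (f.map_rel R fun i => (v i : K)).symm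
    · intro i
      ext b
      constructor
      · rintro ⟨a, ha, rfl⟩
        exact ⟨a, ha, rfl⟩
      · rintro ⟨a, ha, rfl⟩
        exact ⟨⟨a, Set.mem_iUnion.2 ⟨i, ha⟩⟩, ha, rfl⟩
end

section
/- Let K be an infinite relational structure, P a ≃-class of d-tuples of copies with trace type B, and suppose B has finite big Ramsey degree t in K. Then for every colouring c : P → k with k finite, there exists a subcopy K' ∈ Binom(K,K) such that c takes at most t · |Aut(B)| values on P ∩ ∏ Binom(K',A_i). -/
open FirstOrder FirstOrder.Language

/-- If the trace type `B = ⋃ i, x₀ i` of the `≃`-class of `x₀` has big Ramsey degree at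
most `t` in `K`, then for every finite colouring of the class of `x₀` there is a subcopy
`K'` of `K` on which the colouring takes at most `t * |Aut(B)|` values. -/
theorem stmt10 {L : Language} {K : Type*} [L.Structure K] [Infinite K]
    {d : ℕ} (A : Fin d → Type*) [∀ i, L.Structure (A i)] [∀ i, Finite (A i)]
    (x₀ : Fin d → Set K) (hx₀ : ∀ i, IsCopy L (A i) K (x₀ i))
    (t : ℕ)
    (ht : ∀ (k : ℕ) (c : Set K → Fin k), ∃ K' : Set K, IsCopy L K K K' ∧
      ∃ F : Finset (Fin k), F.card ≤ t ∧
        ∀ s : Set K, (∃ e : ((⋃ i, x₀ i : Set K)) ≃ s, IsPartialIso L _ _ e) →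
          s ⊆ K' → c s ∈ F) :
    ∀ (k : ℕ) (c : (Fin d → Set K) → Fin k), ∃ K' : Set K, IsCopy L K K K' ∧
      ∃ F : Finset (Fin k),
        F.card ≤ t * Nat.card {e : ((⋃ i, x₀ i : Set K)) ≃ ((⋃ i, x₀ i : Set K)) //
            IsPartialIso L _ _ e} ∧
        ∀ y : Fin d → Set K, TupEquiv L x₀ y → (∀ i, y i ⊆ K') → c y ∈ F := by
  classical
  intro k c
  -- The trace type B is finite.
  have hBfin : (⋃ i, x₀ i : Set K).Finite := by
    apply Set.finite_iUnion
    intro i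
    obtain ⟨f, hf⟩ := hx₀ i
    rw [← hf]
    exact Set.finite_range f
  haveI : Finite ((⋃ i, x₀ i : Set K)) := hBfin
  haveI : Fintype {e : ((⋃ i, x₀ i : Set K)) ≃ ((⋃ i, x₀ i : Set K)) //
      IsPartialIso L _ _ e} := Fintype.ofFinite _
  set G := {e : ((⋃ i, x₀ i : Set K)) ≃ ((⋃ i, x₀ i : Set K)) // IsPartialIso L _ _ e} with hG
  set n := Nat.card G with hn
  have hcard : Fintype.card (G → Fin k) = k ^ n := by
    rw [Fintype.card_fun, Fintype.card_fin, hn, Nat.card_eq_fintype_card]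
  let enc : (G → Fin k) ≃ Fin (k ^ n) := Fintype.equivFinOfCardEq hcard
  -- the fiber colouring
  let hat : ∀ s : Set K, G → Fin k := fun s g =>
    if h : ∃ e : ((⋃ i, x₀ i : Set K)) ≃ s, IsPartialIso L _ _ e then
      c (fun i => (fun a : ((⋃ i, x₀ i : Set K)) => ((h.choose (g.1 a) : K))) ''
        {a | (a : K) ∈ x₀ i})
    else c x₀
  obtain ⟨K', hK', F', hF'card, hF'⟩ := ht (k ^ n) (fun s => enc (hat s))
  refine ⟨K', hK', (F' ×ˢ (Finset.univ : Finset G)).image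
    (fun p => enc.symm p.1 p.2), ?_, ?_⟩
  · calc ((F' ×ˢ (Finset.univ : Finset G)).image (fun p => enc.symm p.1 p.2)).card
        ≤ (F' ×ˢ (Finset.univ : Finset G)).card := Finset.card_image_le
      _ = F'.card * Fintype.card G := by rw [Finset.card_product, Finset.card_univ]
      _ ≤ t * Nat.card G := by
          rw [Nat.card_eq_fintype_card]
          exact Nat.mul_le_mul_right _ hF'card
  · intro y hy hyK'
    obtain ⟨e, he, hey⟩ := hy
    have hsub : (⋃ i, y i : Set K) ⊆ K' := Set.iUnion_subset hyK'
    have hex : ∃ e' : ((⋃ i, x₀ i : Set K)) ≃ ((⋃ i, y i : Set K)),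
        IsPartialIso L _ _ e' := ⟨e, he⟩
    have hmem : enc (hat (⋃ i, y i)) ∈ F' := hF' (⋃ i, y i) hex hsub
    set e₀ := hex.choose with he₀def
    have he₀ : IsPartialIso L _ _ e₀ := hex.choose_spec
    -- the automorphism relating e and e₀
    have hg : IsPartialIso L _ _ (e.trans e₀.symm) := by
      intro m R v
      have h1 := he m R v
      have h2 := he₀ m R (fun i => e₀.symm (e (v i)))
      simp only [Equiv.apply_symm_apply] at h2
      simpa [Equiv.trans_apply] using h1.trans h2.symm
    have hval : hat (⋃ i, y i) ⟨e.trans e₀.symm, hg⟩ = c y := by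
      show (if h : ∃ e' : ((⋃ i, x₀ i : Set K)) ≃ ((⋃ i, y i : Set K)),
          IsPartialIso L _ _ e' then _ else _) = c y
      rw [dif_pos hex]
      congr 1
      funext i
      rw [← hey i]
      congr 1
      funext a
      simp [Equiv.trans_apply, ← he₀def]
    refine Finset.mem_image.mpr ⟨(enc (hat (⋃ i, y i)), ⟨e.trans e₀.symm, hg⟩), ?_, ?_⟩
    · exact Finset.mem_product.mpr ⟨hmem, Finset.mem_univ _⟩
    · simp [Equiv.symm_apply_apply, hval]
end

section
/- Let K be an infinite relational structure and A ∈ Age(K) with finite box Ramsey degree t = t_□((A,A),K). Then there is a finite Ramsey basis B ⊆ E_K(A) of equivalence relations on Binom(K,A), of size at most 2^t: for every equivalence relation E on Binom(K,A) there is Ẽ ∈ B and K' ∈ Binom(K,K) with E restricted to Binom(K',A) equal to Ẽ restricted to Binom(K',A). -/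
open FirstOrder FirstOrder.Language

section Aux

variable {L : Language} {A K : Type*} [L.Structure A] [L.Structure K]

/-- Two relations on copies of `A` agree on all copies inside some subcopy of `K`. -/
def AgreeOn (L : Language) (A K : Type*) [L.Structure A] [L.Structure K]
    (E E' : {s : Set K // IsCopy L A K s} → {s : Set K // IsCopy L A K s} → Prop) : Prop :=
  ∃ K' : Set K, IsCopy L K K K' ∧
    ∀ s₁ s₂ : {s : Set K // IsCopy L A K s},
      (s₁ : Set K) ⊆ K' → (s₂ : Set K) ⊆ K' → (E s₁ s₂ ↔ E' s₁ s₂)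

lemma isCopy_univ : IsCopy L K K (Set.univ : Set K) :=
  ⟨Embedding.refl L K, by ext x; simp⟩

lemma agreeOn_refl (E : {s : Set K // IsCopy L A K s} → {s : Set K // IsCopy L A K s} → Prop) :
    AgreeOn L A K E E :=
  ⟨Set.univ, isCopy_univ, fun _ _ _ _ => Iff.rfl⟩

lemma agreeOn_symm {E E' : {s : Set K // IsCopy L A K s} → {s : Set K // IsCopy L A K s} → Prop}
    (h : AgreeOn L A K E E') : AgreeOn L A K E' E := by
  obtain ⟨K', h1, h2⟩ := h
  exact ⟨K', h1, fun s₁ s₂ a b => (h2 s₁ s₂ a b).symm⟩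

/-- A family of relations pairwise disagreeing on every subcopy has size at most `2 ^ t`. -/
lemma card_le_of_pairwise (t : ℕ)
    (hR : ∀ (k : ℕ) (c : Set K × Set K → Fin k),
      ∃ K' : Set K, IsCopy L K K K' ∧ ∃ F : Finset (Fin k), F.card ≤ t ∧
        ∀ s₁ s₂ : Set K, IsCopy L A K s₁ → IsCopy L A K s₂ →
          s₁ ⊆ K' → s₂ ⊆ K' → c (s₁, s₂) ∈ F)
    (B : Finset ({s : Set K // IsCopy L A K s} → {s : Set K // IsCopy L A K s} → Prop))
    (hB : ∀ E ∈ B, ∀ E' ∈ B, E ≠ E' → ¬ AgreeOn L A K E E') :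
    B.card ≤ 2 ^ t := by
  classical
  set m := B.card with hm
  let e := B.equivFin
  let Ei : Fin m → ({s : Set K // IsCopy L A K s} → {s : Set K // IsCopy L A K s} → Prop) :=
    fun i => (e.symm i : {x // x ∈ B})
  have hEi_mem : ∀ i, Ei i ∈ B := fun i => (e.symm i).2
  have hEi_inj : Function.Injective Ei := by
    intro i j hij
    have : (e.symm i : {x // x ∈ B}) = e.symm j := Subtype.ext hij
    simpa using e.symm.injective this
  let bits : Set K × Set K → Fin m → Fin 2 := fun p i =>
    if h : IsCopy L A K p.1 ∧ IsCopy L A K p.2 then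
      (if Ei i ⟨p.1, h.1⟩ ⟨p.2, h.2⟩ then 1 else 0) else 0
  let c : Set K × Set K → Fin (2 ^ m) := fun p => finFunctionFinEquiv (bits p)
  obtain ⟨K', hK', F, hF, hcol⟩ := hR (2 ^ m) c
  let φ : Fin m → ({f // f ∈ F} → Fin 2) := fun i f => (finFunctionFinEquiv.symm f.1) i
  have hφ : Function.Injective φ := by
    intro i j hij
    by_contra hne
    refine hB (Ei i) (hEi_mem i) (Ei j) (hEi_mem j) (fun h => hne (hEi_inj h)) ?_
    refine ⟨K', hK', fun s₁ s₂ hs₁ hs₂ => ?_⟩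
    have hmem : c (s₁.1, s₂.1) ∈ F := hcol s₁.1 s₂.1 s₁.2 s₂.2 hs₁ hs₂
    have heq := congrFun hij ⟨c (s₁.1, s₂.1), hmem⟩
    have hbits : bits (s₁.1, s₂.1) i = bits (s₁.1, s₂.1) j := by
      have h1 : φ i ⟨c (s₁.1, s₂.1), hmem⟩ = bits (s₁.1, s₂.1) i := by
        simp only [φ, c, Equiv.symm_apply_apply]
      have h2 : φ j ⟨c (s₁.1, s₂.1), hmem⟩ = bits (s₁.1, s₂.1) j := by
        simp only [φ, c, Equiv.symm_apply_apply]
      rw [← h1, ← h2, heq]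
    have hcopies : IsCopy L A K s₁.1 ∧ IsCopy L A K s₂.1 := ⟨s₁.2, s₂.2⟩
    simp only [bits, dif_pos hcopies] at hbits
    by_cases h1 : Ei i s₁ s₂ <;> by_cases h2 : Ei j s₁ s₂ <;>
      simp_all [Fin.ext_iff]
  have h1 : m = Fintype.card (Fin m) := (Fintype.card_fin m).symm
  have h2 : Fintype.card (Fin m) ≤ Fintype.card ({f // f ∈ F} → Fin 2) :=
    Fintype.card_le_of_injective φ hφ
  have h3 : Fintype.card ({f // f ∈ F} → Fin 2) = 2 ^ F.card := by
    simp [Fintype.card_fun]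
  have h4 : (2 : ℕ) ^ F.card ≤ 2 ^ t := Nat.pow_le_pow_right (by norm_num) hF
  omega

end Aux

/-- If the box Ramsey degree `t = t_□((A,A),K)` is finite, then there is a finite Ramsey
basis of at most `2 ^ t` equivalence relations on the set of copies of `A` in `K`:
every equivalence relation on copies of `A` agrees with a member of the basis when
restricted to the copies of `A` lying inside some subcopy `K'` of `K`. -/
theorem stmt12 {L : Language} {A K : Type*} [L.Structure A] [L.Structure K]
    [Finite A] [Infinite K] (t : ℕ)
    (ht : IsLeast {t' : ℕ | ∀ (k : ℕ) (c : Set K × Set K → Fin k),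
      ∃ K' : Set K, IsCopy L K K K' ∧ ∃ F : Finset (Fin k), F.card ≤ t' ∧
        ∀ s₁ s₂ : Set K, IsCopy L A K s₁ → IsCopy L A K s₂ →
          s₁ ⊆ K' → s₂ ⊆ K' → c (s₁, s₂) ∈ F} t) :
    ∃ B : Finset ({s : Set K // IsCopy L A K s} → {s : Set K // IsCopy L A K s} → Prop),
      B.card ≤ 2 ^ t ∧ (∀ E ∈ B, Equivalence E) ∧
      ∀ E : {s : Set K // IsCopy L A K s} → {s : Set K // IsCopy L A K s} → Prop,
        Equivalence E → ∃ E' ∈ B, ∃ K' : Set K, IsCopy L K K K' ∧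
          ∀ s₁ s₂ : {s : Set K // IsCopy L A K s},
            (s₁ : Set K) ⊆ K' → (s₂ : Set K) ⊆ K' → (E s₁ s₂ ↔ E' s₁ s₂) := by
  classical
  obtain ⟨hmem, -⟩ := ht
  set P : ℕ → Prop := fun n =>
    ∃ B : Finset ({s : Set K // IsCopy L A K s} → {s : Set K // IsCopy L A K s} → Prop),
      (∀ E ∈ B, Equivalence E) ∧
      (∀ E ∈ B, ∀ E' ∈ B, E ≠ E' → ¬ AgreeOn L A K E E') ∧ B.card = n with hP
  have hP0 : P 0 := ⟨∅, by simp, by simp, rfl⟩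
  have hPbound : ∀ n, P n → n ≤ 2 ^ t := by
    rintro n ⟨B, -, h2, h3⟩
    exact h3 ▸ card_le_of_pairwise t hmem B h2
  set n₀ := Nat.findGreatest P (2 ^ t) with hn₀
  have hPn₀ : P n₀ := Nat.findGreatest_spec (Nat.zero_le _) hP0
  obtain ⟨B, hBeq, hBpair, hBcard⟩ := hPn₀
  refine ⟨B, ?_, hBeq, ?_⟩
  · rw [hBcard]; exact Nat.findGreatest_le _
  · intro E hE
    by_contra hcon
    push_neg at hcon
    have hcon' : ∀ E' ∈ B, ¬ AgreeOn L A K E E' := by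
      intro E' hE' hag
      obtain ⟨K', h1, h2⟩ := hag
      obtain ⟨s₁, s₂, hs₁, hs₂, hne⟩ := hcon E' hE' K' h1
      have := h2 s₁ s₂ hs₁ hs₂; tauto
    have hEB : E ∉ B := fun h => hcon' E h (agreeOn_refl E)
    have hgood : P (n₀ + 1) := by
      refine ⟨insert E B, ?_, ?_, by rw [Finset.card_insert_of_notMem hEB, hBcard]⟩
      · intro E₁ h₁
        rcases Finset.mem_insert.mp h₁ with h | h
        · exact h ▸ hE
        · exact hBeq E₁ h
      · intro E₁ h₁ E₂ h₂ hne
        rcases Finset.mem_insert.mp h₁ with h₁' | h₁' <;>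
          rcases Finset.mem_insert.mp h₂ with h₂' | h₂'
        · exact absurd (h₁'.trans h₂'.symm) hne
        · subst h₁'; exact hcon' E₂ h₂'
        · subst h₂'; exact fun hag => hcon' E₁ h₁' (agreeOn_symm hag)
        · exact hBpair E₁ h₁' E₂ h₂' hne
    have hle : n₀ + 1 ≤ n₀ := Nat.le_findGreatest (hPbound _ hgood) hgood
    omega
end

section
/- Let K be an infinite relational structure in a relational language with no unary relations, and suppose the box Ramsey degree t = t_□((A,...,A),K) is finite, where A is a singleton (so Binom(K,A) = K). Then there is a family of at most 2^t many d-ary relations on K such that every d-ary relation R on K agrees with one of them on (K')^d for some subcopy K' ∈ Binom(K,K). -/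
open FirstOrder FirstOrder.Language

/-- In a relational language with no unary relations, if the box Ramsey degree of the
`d`-tuple of singletons in `K` is (exactly) `t` (so that copies of a singleton are just
points of `K`), then there is a family of at most `2 ^ t` many `d`-ary relations on `K`
such that every `d`-ary relation on `K` agrees with one of them on `(K')^d` for some
subcopy `K'` of `K`. -/
theorem stmt13 {L : Language} [L.IsRelational] (hnounary : IsEmpty (L.Relations 1))
    {K : Type*} [L.Structure K] [Infinite K] (d t : ℕ)
    (ht : IsLeast {t' : ℕ | ∀ (k : ℕ) (c : (Fin d → K) → Fin k),
      ∃ K' : Set K, IsCopy L K K K' ∧ ∃ F : Finset (Fin k), F.card ≤ t' ∧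
        ∀ v : Fin d → K, (∀ i, v i ∈ K') → c v ∈ F} t) :
    ∃ Rs : Finset ((Fin d → K) → Prop), Rs.card ≤ 2 ^ t ∧
      ∀ R : (Fin d → K) → Prop, ∃ R' ∈ Rs, ∃ K' : Set K, IsCopy L K K K' ∧
        ∀ v : Fin d → K, (∀ i, v i ∈ K') → (R v ↔ R' v) := by
  classical
  obtain ⟨hmem, hlb⟩ := ht
  -- First, t ≥ 1.
  have ht1 : 1 ≤ t := by
    obtain ⟨K', ⟨f, hf⟩, F, hF, hFm⟩ := hmem 1 (fun _ => 0)
    have hx : Nonempty K := inferInstance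
    obtain ⟨x⟩ := hx
    have : (0 : Fin 1) ∈ F := hFm (fun _ => f x) (fun i => hf ▸ ⟨x, rfl⟩)
    have : 1 ≤ F.card := Finset.card_pos.mpr ⟨0, this⟩
    omega
  -- Minimality: there is an unavoidable coloring c₀ taking > t-1 values on every copy.
  have hnot : ¬ (t - 1) ∈ {t' : ℕ | ∀ (k : ℕ) (c : (Fin d → K) → Fin k),
      ∃ K' : Set K, IsCopy L K K K' ∧ ∃ F : Finset (Fin k), F.card ≤ t' ∧
        ∀ v : Fin d → K, (∀ i, v i ∈ K') → c v ∈ F} := by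
    intro h
    have := hlb h
    omega
  simp only [Set.mem_setOf_eq, not_forall, not_exists, not_and] at hnot
  obtain ⟨k₀, c₀, hc₀⟩ := hnot
  -- hc₀ : ∀ K', IsCopy → ∀ F, ¬(F.card ≤ t-1 ∧ ∀ v ...)
  -- Apply the Ramsey property to c₀ to get a copy K₀ = range f₀ with ≤ t colors.
  obtain ⟨K₀, ⟨f₀, hf₀⟩, F₀, hF₀card, hF₀mem⟩ := hmem k₀ c₀
  -- The restricted coloring.
  set c₁ : (Fin d → K) → Fin k₀ := fun v => c₀ (f₀ ∘ v) with hc₁def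
  have hglob : ∀ v, c₁ v ∈ F₀ := by
    intro v
    exact hF₀mem _ (fun i => hf₀ ▸ ⟨v i, rfl⟩)
  -- Unavoidability of c₁: on every copy it misses any set of ≤ t-1 colors.
  have hunav : ∀ (g : K ↪[L] K) (F : Finset (Fin k₀)), F.card ≤ t - 1 →
      ∃ v : Fin d → K, (∀ i, v i ∈ Set.range g) ∧ c₁ v ∉ F := by
    intro g F hFcard
    have h := hc₀ (Set.range (f₀.comp g)) ⟨f₀.comp g, rfl⟩ F
    obtain ⟨v, hv, hvF⟩ := h hFcard
    have : ∀ i, ∃ y, f₀ (g y) = v i := by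
      intro i
      obtain ⟨y, hy⟩ := hv i
      exact ⟨y, by simpa using hy⟩
    choose y hy using this
    refine ⟨fun i => g (y i), fun i => ⟨y i, rfl⟩, ?_⟩
    have : (f₀ ∘ fun i => g (y i)) = v := funext fun i => hy i
    simpa [hc₁def, this] using hvF
  -- The family of relations.
  refine ⟨F₀.powerset.image (fun S => fun v => c₁ v ∈ S), ?_, ?_⟩
  · calc (F₀.powerset.image (fun S => fun v => c₁ v ∈ S)).card
        ≤ F₀.powerset.card := Finset.card_image_le
      _ = 2 ^ F₀.card := Finset.card_powerset F₀
      _ ≤ 2 ^ t := Nat.pow_le_pow_right (by norm_num) hF₀card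
  · intro R
    -- product coloring
    set e : Fin k₀ × Fin 2 ≃ Fin (k₀ * 2) := finProdFinEquiv with hedef
    set b : (Fin d → K) → Fin 2 := fun v => if R v then 1 else 0 with hbdef
    set c : (Fin d → K) → Fin (k₀ * 2) := fun v => e (c₁ v, b v) with hcdef
    obtain ⟨K₁, hK₁copy, F₁, hF₁card, hF₁mem⟩ := hmem (k₀ * 2) c
    obtain ⟨g, hg⟩ := hK₁copy
    set π : Fin (k₀ * 2) → Fin k₀ := fun p => (e.symm p).1 with hπdef
    set G : Finset (Fin k₀) := F₁.image π with hGdef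
    have hcv : ∀ v : Fin d → K, (∀ i, v i ∈ K₁) → c v ∈ F₁ := hF₁mem
    have hπc : ∀ v, π (c v) = c₁ v := by
      intro v
      simp [hπdef, hcdef]
    have hGcard : t ≤ G.card := by
      by_contra hcon
      push_neg at hcon
      have : G.card ≤ t - 1 := by omega
      obtain ⟨v, hv, hvG⟩ := hunav g G this
      have hvK : ∀ i, v i ∈ K₁ := fun i => hg ▸ hv i
      exact hvG (hGdef ▸ Finset.mem_image.mpr ⟨c v, hcv v hvK, hπc v⟩)
    set S : Finset (Fin k₀) := F₀.filter (fun a => e (a, (1 : Fin 2)) ∈ F₁) with hSdef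
    refine ⟨fun v => c₁ v ∈ S, Finset.mem_image.mpr ⟨S, Finset.mem_powerset.mpr
      (Finset.filter_subset _ _), rfl⟩, K₁, ⟨g, hg⟩, ?_⟩
    intro v hv
    have hcvF₁ : c v ∈ F₁ := hcv v hv
    constructor
    · intro hR
      have hb : b v = 1 := by simp [hbdef, hR]
      have : e (c₁ v, (1 : Fin 2)) ∈ F₁ := by
        have := hcvF₁
        rw [hcdef] at this
        simpa [hb] using this
      exact Finset.mem_filter.mpr ⟨hglob v, this⟩
    · intro hS
      by_contra hR
      have hb : b v = 0 := by simp [hbdef, hR]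
      have h0 : e (c₁ v, (0 : Fin 2)) ∈ F₁ := by
        have := hcvF₁
        rw [hcdef] at this
        simpa [hb] using this
      have h1 : e (c₁ v, (1 : Fin 2)) ∈ F₁ := (Finset.mem_filter.mp hS).2
      set x := e (c₁ v, (0 : Fin 2)) with hxdef
      set y := e (c₁ v, (1 : Fin 2)) with hydef
      have hxy : x ≠ y := by
        simp only [hxdef, hydef]
        intro h
        have := e.injective h
        simp at this
      have hπx : π x = c₁ v := by simp [hπdef, hxdef]
      have hπy : π y = c₁ v := by simp [hπdef, hydef]
      -- G ⊆ image of erase x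
      have hsub : G ⊆ (F₁.erase x).image π := by
        intro a ha
        obtain ⟨p, hp, hpa⟩ := Finset.mem_image.mp ha
        by_cases hpx : p = x
        · exact Finset.mem_image.mpr ⟨y, Finset.mem_erase.mpr ⟨hxy.symm, h1⟩,
            by rw [hπy, ← hπx, ← hpx, hpa]⟩
        · exact Finset.mem_image.mpr ⟨p, Finset.mem_erase.mpr ⟨hpx, hp⟩, hpa⟩
      have h2 : G.card ≤ (F₁.erase x).card :=
        (Finset.card_le_card hsub).trans Finset.card_image_le
      have h3 : (F₁.erase x).card = F₁.card - 1 := Finset.card_erase_of_mem h0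
      have h4 : 1 ≤ F₁.card := Finset.card_pos.mpr ⟨x, h0⟩
      omega
end

section
/- If KK and II are Fraïssé classes (satisfying hereditary, joint embedding, and amalgamation properties), then the class KK^II of II-indexed KK-structures is also a Fraïssé class. -/
open FirstOrder FirstOrder.Language CategoryTheory

universe u1 u2 u3 u4 u v

/-- An `II`-indexed `KK`-structure: an index structure `J` together with a labeling of
its points by structures in the label language. -/
abbrev IndexedStr (L : FirstOrder.Language.{u1, u2}) (L' : FirstOrder.Language.{u3, u4}) :
    Type (max u1 u2 u3 u4 (u + 1) (v + 1)) :=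
  Σ J : Bundled.{u} L.Structure, (J → Bundled.{v} L'.Structure)

/-- An embedding of indexed structures: an embedding `idx` of index structures together
with embeddings of each label into the label of the image index. -/
structure IndexedEmb {L L' : Language} (X Y : IndexedStr L L') where
  idx : X.1 ↪[L] Y.1
  lab : ∀ j : X.1, X.2 j ↪[L'] Y.2 (idx j)

/-- An isomorphism of indexed structures. -/
structure IndexedIso {L L' : Language} (X Y : IndexedStr L L') where
  idx : X.1 ≃[L] Y.1
  lab : ∀ j : X.1, X.2 j ≃[L'] Y.2 (idx j)

/-- The class `KK^II` of `II`-indexed `KK`-structures. -/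
def indexedClass {L L' : Language} (II : Set (Bundled L.Structure))
    (KK : Set (Bundled L'.Structure)) : Set (IndexedStr L L') :=
  {X | X.1 ∈ II ∧ ∀ j, X.2 j ∈ KK}

/-- Hereditary property for a class of indexed structures (closure, up to isomorphism,
under indexed substructures, i.e. under embeddability). -/
def IndHereditary {L : FirstOrder.Language.{u1, u2}} {L' : FirstOrder.Language.{u3, u4}} (C : Set (IndexedStr.{u1, u2, u3, u4, u, v} L L')) : Prop :=
  ∀ X ∈ C, ∀ Y : IndexedStr.{u1, u2, u3, u4, u, v} L L', Nonempty (IndexedEmb Y X) →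
    ∃ Y' ∈ C, Nonempty (IndexedIso Y Y')

/-- Joint embedding property for a class of indexed structures. -/
def IndJEP {L : FirstOrder.Language.{u1, u2}} {L' : FirstOrder.Language.{u3, u4}} (C : Set (IndexedStr.{u1, u2, u3, u4, u, v} L L')) : Prop :=
  ∀ X ∈ C, ∀ Y ∈ C, ∃ Z ∈ C, Nonempty (IndexedEmb X Z) ∧ Nonempty (IndexedEmb Y Z)

/-- Amalgamation property for a class of indexed structures (the commuting condition is
expressed pointwise, with `HEq` on labels since their target indices are equal but not
definitionally so). -/
def IndAP {L : FirstOrder.Language.{u1, u2}} {L' : FirstOrder.Language.{u3, u4}} (C : Set (IndexedStr.{u1, u2, u3, u4, u, v} L L')) : Prop :=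
  ∀ X Y Z : IndexedStr.{u1, u2, u3, u4, u, v} L L', X ∈ C → Y ∈ C → Z ∈ C →
    ∀ (f : IndexedEmb X Y) (g : IndexedEmb X Z),
      ∃ W ∈ C, ∃ (f' : IndexedEmb Y W) (g' : IndexedEmb Z W),
        (∀ a : X.1, f'.idx (f.idx a) = g'.idx (g.idx a)) ∧
        ∀ (a : X.1) (b : X.2 a),
          HEq ((f'.lab (f.idx a)) ((f.lab a) b)) ((g'.lab (g.idx a)) ((g.lab a) b))



noncomputable section Stmt16Aux

variable {L : Language} [L.IsRelational]

/-- The induced structure on a subset of a relational structure. -/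
def stmt16SubStr (M : Bundled L.Structure) (s : Set M) : L.Structure s where
  funMap := fun {n} fn _ => isEmptyElim fn
  RelMap := fun {n} r x => Structure.RelMap r fun i => (x i : M)

/-- The induced substructure on a subset, as a bundled structure. -/
def stmt16Sub (M : Bundled L.Structure) (s : Set M) : Bundled L.Structure :=
  ⟨s, stmt16SubStr M s⟩

/-- The inclusion embedding of an induced substructure. -/
def stmt16SubEmb (M : Bundled L.Structure) (s : Set M) : stmt16Sub M s ↪[L] M where
  toFun := Subtype.val
  inj' := Subtype.val_injective
  map_fun' := fun {n} fn _ => isEmptyElim fn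
  map_rel' := fun {n} r x => Iff.rfl

/-- Corestriction of an embedding to an induced substructure containing its range. -/
def stmt16IntoSub {M A : Bundled L.Structure} (f : A ↪[L] M) (s : Set M)
    (h : ∀ a, f a ∈ s) : A ↪[L] stmt16Sub M s where
  toFun := fun a => ⟨f a, h a⟩
  inj' := fun _ _ hab => f.injective (congrArg Subtype.val hab)
  map_fun' := fun {n} fn _ => isEmptyElim fn
  map_rel' := fun {n} r x => f.map_rel' r x

/-- Transport an embedding along an equality of bundled codomains. -/
def stmt16EmbCast {L' : Language} {A B C : Bundled L'.Structure} (h : B = C)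
    (f : A ↪[L'] B) : A ↪[L'] C := h ▸ f

theorem stmt16EmbCast_heq {L' : Language} {A B C : Bundled L'.Structure} (h : B = C)
    (f : A ↪[L'] B) (x : A) : HEq (stmt16EmbCast h f x) (f x) := by subst h; rfl

/-- Transport an embedding along an equality of bundled domains. -/
def stmt16EmbCastSrc {L' : Language} {A B C : Bundled L'.Structure} (h : A = B)
    (f : A ↪[L'] C) : B ↪[L'] C := h ▸ f

/-- Transport an equivalence along an equality of bundled codomains. -/
def stmt16EquivCast {L' : Language} {A B C : Bundled L'.Structure} (h : B = C)
    (f : A ≃[L'] B) : A ≃[L'] C := h ▸ f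

/-- Per-point label data for amalgamation of indexed structures. -/
structure Stmt16Data {L' : Language} (KK : Set (Bundled L'.Structure))
    {JX JY JZ : Type*} {Q0 : Type*}
    (lX : JX → Bundled L'.Structure) (lY : JY → Bundled L'.Structure)
    (lZ : JZ → Bundled L'.Structure)
    (fidx : JX → JY) (gidx : JX → JZ)
    (flab : ∀ a, lX a ↪[L'] lY (fidx a)) (glab : ∀ a, lX a ↪[L'] lZ (gidx a))
    (f' : JY → Q0) (g' : JZ → Q0) (pt : Q0) where
  W : Bundled L'.Structure
  mem : W ∈ KK
  eY : ∀ b, f' b = pt → (lY b ↪[L'] W)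
  eZ : ∀ c, g' c = pt → (lZ c ↪[L'] W)
  compat : ∀ a (hb : f' (fidx a) = pt) (hc : g' (gidx a) = pt) (x : lX a),
    eY _ hb (flab a x) = eZ _ hc (glab a x)

theorem Stmt16Data.glue {L' : Language} {KK : Set (Bundled L'.Structure)}
    {JX JY JZ : Type*} {Q0 : Type*}
    {lX : JX → Bundled L'.Structure} {lY : JY → Bundled L'.Structure}
    {lZ : JZ → Bundled L'.Structure}
    {fidx : JX → JY} {gidx : JX → JZ}
    {flab : ∀ a, lX a ↪[L'] lY (fidx a)} {glab : ∀ a, lX a ↪[L'] lZ (gidx a)}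
    {f' : JY → Q0} {g' : JZ → Q0} {T : Type*} (π : T → Q0)
    (D : ∀ p : T, Stmt16Data KK lX lY lZ fidx gidx flab glab f' g' (π p))
    {p q : T} (h : p = q) (a : JX) (hb : f' (fidx a) = π p) (hc : g' (gidx a) = π q)
    (x : lX a) :
    HEq ((D p).eY (fidx a) hb (flab a x)) ((D q).eZ (gidx a) hc (glab a x)) := by
  subst h
  exact heq_of_eq ((D p).compat a hb hc x)

universe w0

/-- Any finite structure has an isomorphic copy in any universe. -/
theorem stmt16Shrink {L : Language} (A : Bundled L.Structure) (hfin : Finite A) :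
    ∃ B : Bundled.{w0} L.Structure, Nonempty (A ≃[L] B) := by
  obtain ⟨n, ⟨φ⟩⟩ := Finite.exists_equiv_fin A
  let ψ : A ≃ ULift.{w0} (Fin n) := φ.trans Equiv.ulift.symm
  exact ⟨⟨ULift.{w0} (Fin n), ψ.inducedStructure⟩,
    ⟨@Equiv.inducedStructureEquiv L A _ _ ψ⟩⟩

end Stmt16Aux

/-- If `KK` and `II` are Fraïssé classes of finite relational structures (satisfying the
hereditary, joint embedding, and amalgamation properties), then the class `KK^II` of
`II`-indexed `KK`-structures also satisfies the hereditary, joint embedding, and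
amalgamation properties, i.e. it is a Fraïssé class. -/
theorem stmt16 {L L' : Language} [L.IsRelational] [L'.IsRelational]
    (II : Set (Bundled L.Structure)) (KK : Set (Bundled L'.Structure))
    (hfinI : ∀ M ∈ II, Finite M) (hfinK : ∀ M ∈ KK, Finite M)
    (hHPI : ∀ M ∈ II, ∀ N : Bundled L.Structure,
      Nonempty (N ↪[L] M) → ∃ N' ∈ II, Nonempty (N ≃[L] N'))
    (hHPK : ∀ M ∈ KK, ∀ N : Bundled L'.Structure,
      Nonempty (N ↪[L'] M) → ∃ N' ∈ KK, Nonempty (N ≃[L'] N'))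
    (hJEPI : ∀ M ∈ II, ∀ N ∈ II, ∃ P ∈ II,
      Nonempty (M ↪[L] P) ∧ Nonempty (N ↪[L] P))
    (hJEPK : ∀ M ∈ KK, ∀ N ∈ KK, ∃ P ∈ KK,
      Nonempty (M ↪[L'] P) ∧ Nonempty (N ↪[L'] P))
    (hAPI : ∀ M N P : Bundled L.Structure, M ∈ II → N ∈ II → P ∈ II →
      ∀ (f : M ↪[L] N) (g : M ↪[L] P), ∃ Q ∈ II,
        ∃ (f' : N ↪[L] Q) (g' : P ↪[L] Q), ∀ a : M, f' (f a) = g' (g a))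
    (hAPK : ∀ M N P : Bundled L'.Structure, M ∈ KK → N ∈ KK → P ∈ KK →
      ∀ (f : M ↪[L'] N) (g : M ↪[L'] P), ∃ Q ∈ KK,
        ∃ (f' : N ↪[L'] Q) (g' : P ↪[L'] Q), ∀ a : M, f' (f a) = g' (g a)) :
    IndHereditary (indexedClass II KK) ∧ IndJEP (indexedClass II KK) ∧
      IndAP (indexedClass II KK) := by
  classical
  refine ⟨?_, ?_, ?_⟩
  · -- Hereditary property
    rintro X hX Y ⟨emb⟩
    haveI : Finite X.1 := hfinI X.1 hX.1
    have hfY : Finite Y.1 := Finite.of_injective emb.idx emb.idx.injective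
    obtain ⟨B, ⟨χ⟩⟩ := stmt16Shrink Y.1 hfY
    obtain ⟨J', hJ', ⟨e'⟩⟩ := hHPI X.1 hX.1 B ⟨emb.idx.comp χ.symm.toEmbedding⟩
    have e : Y.1 ≃[L] J' := e'.comp χ
    have hK : ∀ j : Y.1, ∃ K ∈ KK, Nonempty ((Y.2 j) ≃[L'] K) := by
      intro j
      haveI : Finite (X.2 (emb.idx j)) := hfinK _ (hX.2 _)
      have hfin : Finite (Y.2 j) := Finite.of_injective (emb.lab j) (emb.lab j).injective
      obtain ⟨B', ⟨χ'⟩⟩ := stmt16Shrink (Y.2 j) hfin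
      obtain ⟨K, hKmem, ⟨e''⟩⟩ := hHPK (X.2 (emb.idx j)) (hX.2 _) B'
        ⟨(emb.lab j).comp χ'.symm.toEmbedding⟩
      exact ⟨K, hKmem, ⟨e''.comp χ'⟩⟩
    choose K hKmem hKiso using hK
    exact ⟨⟨J', fun j' => K (e.symm j')⟩, ⟨hJ', fun j' => hKmem _⟩,
      ⟨⟨e, fun j => stmt16EquivCast (congrArg K (e.symm_apply_apply j).symm)
        (hKiso j).some⟩⟩⟩
  · -- Joint embedding property
    rintro X ⟨hXI, hXK⟩ Y ⟨hYI, hYK⟩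
    obtain ⟨P, hP, ⟨f⟩, ⟨g⟩⟩ := hJEPI X.1 hXI Y.1 hYI
    set s : Set P := Set.range f ∪ Set.range g with hs
    haveI : Finite P := hfinI P hP
    have hfinSub : Finite (stmt16Sub P s) := Subtype.finite
    obtain ⟨B, ⟨χ⟩⟩ := stmt16Shrink (stmt16Sub P s) hfinSub
    obtain ⟨Q, hQ, ⟨e'⟩⟩ := hHPI P hP B ⟨(stmt16SubEmb P s).comp χ.symm.toEmbedding⟩
    have e : stmt16Sub P s ≃[L] Q := e'.comp χ
    have claim : ∀ p : (stmt16Sub P s), Nonempty (Stmt16Data KK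
        (fun a : PEmpty.{1} => X.2 a.elim) X.2 Y.2
        (fun a => a.elim) (fun a => a.elim) (fun a => a.elim) (fun a => a.elim)
        (⇑f) (⇑g) p.1) := by
      intro p
      by_cases hb : ∃ b, f b = p.1
      · obtain ⟨b₀, hb₀⟩ := hb
        by_cases hc : ∃ c, g c = p.1
        · obtain ⟨c₀, hc₀⟩ := hc
          obtain ⟨W, hW, ⟨F⟩, ⟨G⟩⟩ := hJEPK (X.2 b₀) (hXK _) (Y.2 c₀) (hYK _)
          exact ⟨⟨W, hW,
            fun b h => stmt16EmbCastSrc (congrArg X.2 (f.injective (hb₀.trans h.symm))) F,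
            fun c h => stmt16EmbCastSrc (congrArg Y.2 (g.injective (hc₀.trans h.symm))) G,
            fun a => a.elim⟩⟩
        · exact ⟨⟨X.2 b₀, hXK _,
            fun b h => stmt16EmbCastSrc (congrArg X.2 (f.injective (hb₀.trans h.symm)))
              (Embedding.refl L' _),
            fun c h => (hc ⟨c, h⟩).elim,
            fun a => a.elim⟩⟩
      · have hc : ∃ c, g c = p.1 := by
          rcases p.2 with h | h
          · exact absurd h hb
          · exact h
        obtain ⟨c₀, hc₀⟩ := hc
        exact ⟨⟨Y.2 c₀, hYK _,
          fun b h => (hb ⟨b, h⟩).elim,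
          fun c h => stmt16EmbCastSrc (congrArg Y.2 (g.injective (hc₀.trans h.symm)))
            (Embedding.refl L' _),
          fun a => a.elim⟩⟩
    let D : ∀ p : (stmt16Sub P s), Stmt16Data KK
        (fun a : PEmpty.{1} => X.2 a.elim) X.2 Y.2
        (fun a => a.elim) (fun a => a.elim) (fun a => a.elim) (fun a => a.elim)
        (⇑f) (⇑g) p.1 := fun p => (claim p).some
    exact ⟨⟨Q, fun q => (D (e.symm q)).W⟩, ⟨hQ, fun q => (D _).mem⟩,
      ⟨⟨e.toEmbedding.comp (stmt16IntoSub f s fun a => Or.inl ⟨a, rfl⟩),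
        fun j => stmt16EmbCast
          (congrArg (fun p => (D p).W) (e.symm_apply_apply ⟨f j, Or.inl ⟨j, rfl⟩⟩).symm)
          ((D ⟨f j, Or.inl ⟨j, rfl⟩⟩).eY j rfl)⟩⟩,
      ⟨⟨e.toEmbedding.comp (stmt16IntoSub g s fun a => Or.inr ⟨a, rfl⟩),
        fun j => stmt16EmbCast
          (congrArg (fun p => (D p).W) (e.symm_apply_apply ⟨g j, Or.inr ⟨j, rfl⟩⟩).symm)
          ((D ⟨g j, Or.inr ⟨j, rfl⟩⟩).eZ j rfl)⟩⟩⟩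
  · -- Amalgamation property
    rintro X Y Z ⟨hXI, hXK⟩ ⟨hYI, hYK⟩ ⟨hZI, hZK⟩ f g
    obtain ⟨Q, hQ, f', g', hcomm⟩ := hAPI X.1 Y.1 Z.1 hXI hYI hZI f.idx g.idx
    set s : Set Q := Set.range f' ∪ Set.range g' with hs
    haveI : Finite Q := hfinI Q hQ
    have hfinSub : Finite (stmt16Sub Q s) := Subtype.finite
    obtain ⟨B, ⟨χ⟩⟩ := stmt16Shrink (stmt16Sub Q s) hfinSub
    obtain ⟨R, hR, ⟨e'⟩⟩ := hHPI Q hQ B ⟨(stmt16SubEmb Q s).comp χ.symm.toEmbedding⟩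
    have e : stmt16Sub Q s ≃[L] R := e'.comp χ
    have claim : ∀ p : (stmt16Sub Q s), Nonempty (Stmt16Data KK X.2 Y.2 Z.2
        f.idx g.idx f.lab g.lab (⇑f') (⇑g') p.1) := by
      intro p
      by_cases hb : ∃ b, f' b = p.1
      · obtain ⟨b₀, hb₀⟩ := hb
        by_cases ha : ∃ a, f.idx a = b₀
        · obtain ⟨a₀, ha₀⟩ := ha
          obtain ⟨W, hW, F, G, key⟩ := hAPK (X.2 a₀) (Y.2 (f.idx a₀)) (Z.2 (g.idx a₀))
            (hXK _) (hYK _) (hZK _) (f.lab a₀) (g.lab a₀)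
          have hbval : f' (f.idx a₀) = p.1 := by rw [ha₀, hb₀]
          have hcval : g' (g.idx a₀) = p.1 := by rw [← hcomm a₀, hbval]
          refine ⟨⟨W, hW,
            fun b h => stmt16EmbCastSrc (congrArg Y.2 (f'.injective (hbval.trans h.symm))) F,
            fun c h => stmt16EmbCastSrc (congrArg Z.2 (g'.injective (hcval.trans h.symm))) G,
            fun a hba hca x => ?_⟩⟩
          obtain rfl : a₀ = a := f.idx.injective (f'.injective (hbval.trans hba.symm))
          exact key x
        · by_cases hc : ∃ c, g' c = p.1
          · obtain ⟨c₀, hc₀⟩ := hc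
            obtain ⟨W, hW, ⟨F⟩, ⟨G⟩⟩ := hJEPK (Y.2 b₀) (hYK _) (Z.2 c₀) (hZK _)
            exact ⟨⟨W, hW,
              fun b h => stmt16EmbCastSrc (congrArg Y.2 (f'.injective (hb₀.trans h.symm))) F,
              fun c h => stmt16EmbCastSrc (congrArg Z.2 (g'.injective (hc₀.trans h.symm))) G,
              fun a hba hca x => (ha ⟨a, f'.injective (hba.trans hb₀.symm)⟩).elim⟩⟩
          · exact ⟨⟨Y.2 b₀, hYK _,
              fun b h => stmt16EmbCastSrc (congrArg Y.2 (f'.injective (hb₀.trans h.symm)))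
                (Embedding.refl L' _),
              fun c h => (hc ⟨c, h⟩).elim,
              fun a hba hca x => (hc ⟨g.idx a, hca⟩).elim⟩⟩
      · have hc : ∃ c, g' c = p.1 := by
          rcases p.2 with h | h
          · exact absurd h hb
          · exact h
        obtain ⟨c₀, hc₀⟩ := hc
        exact ⟨⟨Z.2 c₀, hZK _,
          fun b h => (hb ⟨b, h⟩).elim,
          fun c h => stmt16EmbCastSrc (congrArg Z.2 (g'.injective (hc₀.trans h.symm)))
            (Embedding.refl L' _),
          fun a hba hca x => (hb ⟨f.idx a, hba⟩).elim⟩⟩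
    let D : ∀ p : (stmt16Sub Q s), Stmt16Data KK X.2 Y.2 Z.2
        f.idx g.idx f.lab g.lab (⇑f') (⇑g') p.1 := fun p => (claim p).some
    refine ⟨⟨R, fun r => (D (e.symm r)).W⟩, ⟨hR, fun r => (D _).mem⟩,
      ⟨e.toEmbedding.comp (stmt16IntoSub f' s fun b => Or.inl ⟨b, rfl⟩),
        fun b => stmt16EmbCast
          (congrArg (fun p => (D p).W) (e.symm_apply_apply ⟨f' b, Or.inl ⟨b, rfl⟩⟩).symm)
          ((D ⟨f' b, Or.inl ⟨b, rfl⟩⟩).eY b rfl)⟩,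
      ⟨e.toEmbedding.comp (stmt16IntoSub g' s fun c => Or.inr ⟨c, rfl⟩),
        fun c => stmt16EmbCast
          (congrArg (fun p => (D p).W) (e.symm_apply_apply ⟨g' c, Or.inr ⟨c, rfl⟩⟩).symm)
          ((D ⟨g' c, Or.inr ⟨c, rfl⟩⟩).eZ c rfl)⟩,
      fun a => congrArg (fun p => e p) (Subtype.ext (hcomm a)),
      fun a x => ?_⟩
    exact ((stmt16EmbCast_heq _ _ _).trans (Stmt16Data.glue
      (fun p : (stmt16Sub Q s) => p.1) D (Subtype.ext (hcomm a)) a rfl rfl x)).trans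
      (stmt16EmbCast_heq _ _ _).symm
end

section
/- Let ∼ be the relation on a linearly ordered set (Ω, <) generated by: x ∼ y whenever the open interval {b : x < b < y} (or {b : y < b < x}) is a dense linear order, together with symmetry and reflexivity/transitivity closure. Then every ∼-equivalence class is convex: if x ∼ y and x < b < y, then x ∼ b. -/
/-- The generating relation: `x ∼₀ y` iff `x = y`, or the open interval between `x` and
`y` (with the induced order) is a dense linear order. -/
def DenseIntervalRel {Ω : Type*} [LinearOrder Ω] (x y : Ω) : Prop :=
  x = y ∨ (x < y ∧ DenselyOrdered (Set.Ioo x y)) ∨ (y < x ∧ DenselyOrdered (Set.Ioo y x))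

lemma denseSubLeft {Ω : Type*} [LinearOrder Ω] {x y b : Ω} (hb : b < y)
    (h : DenselyOrdered (Set.Ioo x y)) : DenselyOrdered (Set.Ioo x b) := by
  constructor
  rintro ⟨u, hu1, hu2⟩ ⟨v, hv1, hv2⟩ huv
  have huv' : u < v := huv
  obtain ⟨⟨w, hw⟩, h1, h2⟩ := h.dense ⟨u, hu1, hu2.trans hb⟩ ⟨v, hv1, hv2.trans hb⟩ huv'
  have h2' : w < v := h2
  exact ⟨⟨w, hw.1, h2'.trans hv2⟩, h1, h2'⟩

lemma denseSubRight {Ω : Type*} [LinearOrder Ω] {x y b : Ω} (hb : x < b)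
    (h : DenselyOrdered (Set.Ioo x y)) : DenselyOrdered (Set.Ioo b y) := by
  constructor
  rintro ⟨u, hu1, hu2⟩ ⟨v, hv1, hv2⟩ huv
  have huv' : u < v := huv
  obtain ⟨⟨w, hw⟩, h1, h2⟩ := h.dense ⟨u, hb.trans hu1, hu2⟩ ⟨v, hb.trans hv1, hv2⟩ huv'
  have h1' : u < w := h1
  exact ⟨⟨w, hu1.trans h1', hw.2⟩, h1', h2⟩

lemma genConvex {Ω : Type*} [LinearOrder Ω] {x y b : Ω} (h : DenseIntervalRel x y)
    (hb : (x < b ∧ b < y) ∨ (y < b ∧ b < x)) : DenseIntervalRel x b := by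
  rcases hb with ⟨h1, h2⟩ | ⟨h1, h2⟩
  · rcases h with rfl | ⟨_, hd⟩ | ⟨hlt, _⟩
    · exact absurd (h1.trans h2) (lt_irrefl x)
    · exact Or.inr (Or.inl ⟨h1, denseSubLeft h2 hd⟩)
    · exact absurd (h1.trans h2) (not_lt.2 hlt.le)
  · rcases h with rfl | ⟨hlt, _⟩ | ⟨_, hd⟩
    · exact absurd (h1.trans h2) (lt_irrefl x)
    · exact absurd (h1.trans h2) (not_lt.2 hlt.le)
    · exact Or.inr (Or.inr ⟨h2, denseSubRight h1 hd⟩)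

/-- The equivalence relation generated by `DenseIntervalRel` has convex classes:
if `x ∼ y` and `x < b < y`, then `x ∼ b`. -/
theorem stmt19 {Ω : Type*} [LinearOrder Ω] (x y b : Ω)
    (hxy : Relation.EqvGen (DenseIntervalRel (Ω := Ω)) x y)
    (hxb : x < b) (hby : b < y) :
    Relation.EqvGen (DenseIntervalRel (Ω := Ω)) x b := by
  suffices h : ∀ u v : Ω, Relation.EqvGen (DenseIntervalRel (Ω := Ω)) u v →
      ∀ c, (u < c ∧ c < v) ∨ (v < c ∧ c < u) →
      Relation.EqvGen (DenseIntervalRel (Ω := Ω)) u c by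
    exact h x y hxy b (Or.inl ⟨hxb, hby⟩)
  intro u v h
  induction h with
  | rel p q hpq =>
    intro c hc
    exact Relation.EqvGen.rel _ _ (genConvex hpq hc)
  | refl p =>
    rintro c (⟨h1, h2⟩ | ⟨h1, h2⟩) <;> exact absurd (h1.trans h2) (lt_irrefl p)
  | symm p q h ih =>
    intro c hc
    exact Relation.EqvGen.trans _ _ _ (Relation.EqvGen.symm _ _ h) (ih c hc.symm)
  | trans p q r h1 h2 ih1 ih2 =>
    rintro c (⟨hc1, hc2⟩ | ⟨hc1, hc2⟩)
    · rcases lt_trichotomy c q with hcq | rfl | hqc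
      · exact ih1 c (Or.inl ⟨hc1, hcq⟩)
      · exact h1
      · exact Relation.EqvGen.trans _ _ _ h1 (ih2 c (Or.inl ⟨hqc, hc2⟩))
    · rcases lt_trichotomy c q with hcq | rfl | hqc
      · exact Relation.EqvGen.trans _ _ _ h1 (ih2 c (Or.inr ⟨hc1, hcq⟩))
      · exact h1
      · exact ih1 c (Or.inr ⟨hqc, hc2⟩)
end
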